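/- Let K ≥ 1 be an integer and g₁, …, g_K ∈ ℝ. Set pᵢᵇ = σ(gᵢ) and A = Σ_{i=1}^K pᵢᵇ · ∏_{j≠i} (1 − pⱼᵇ) + ∏_{j=1}^K (1 − pⱼᵇ). Then for every i ∈ {1, …, K}, (1/A) · pᵢᵇ · ∏_{j≠i} (1 − pⱼᵇ) = exp(gᵢ) / (1 + Σ_{j=1}^K exp(gⱼ)). -/

import Mathlib

open Finset

/-- The logistic sigmoid function. -/
noncomputable def sigmoid (t : ℝ) : ℝ := 1 / (1 + Real.exp (-t))

/-- Theorem 1 of the paper: the Dempster–Shafer combined evidence of the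
one-versus-all binary classifiers with logits `g i` and sigmoid probabilities
`p i = σ (g i)` equals `exp (g i) / (1 + ∑ j exp (g j))`. -/
theorem stmt_0 (K : ℕ) (hK : 1 ≤ K) (g : Fin K → ℝ) (p : Fin K → ℝ)
    (hp : ∀ i, p i = sigmoid (g i)) (A : ℝ)
    (hA : A = ∑ i, p i * ∏ j ∈ univ.erase i, (1 - p j) + ∏ j, (1 - p j)) :
    ∀ i, (1 / A) * (p i * ∏ j ∈ univ.erase i, (1 - p j)) =
      Real.exp (g i) / (1 + ∑ j, Real.exp (g j)) := by
  have hpos : ∀ i, (0:ℝ) < 1 + Real.exp (g i) := fun i => by positivity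
  have hpv : ∀ i, p i = Real.exp (g i) * (1 + Real.exp (g i))⁻¹ := by
    intro i
    rw [hp i, sigmoid, Real.exp_neg]
    have h := (Real.exp_pos (g i)).ne'
    field_simp
    ring
  have h1p : ∀ i, 1 - p i = (1 + Real.exp (g i))⁻¹ := by
    intro i
    rw [hpv i]
    field_simp
    ring
  set P : ℝ := ∏ j, (1 + Real.exp (g j))⁻¹ with hP
  have hPpos : 0 < P := Finset.prod_pos fun j _ => by positivity
  have hterm : ∀ i, p i * ∏ j ∈ univ.erase i, (1 - p j) = Real.exp (g i) * P := by
    intro i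
    have : ∏ j ∈ univ.erase i, (1 - p j) = ∏ j ∈ univ.erase i, (1 + Real.exp (g j))⁻¹ :=
      Finset.prod_congr rfl fun j _ => h1p j
    rw [hpv i, this, mul_assoc, hP, ← Finset.mul_prod_erase univ (fun j => (1 + Real.exp (g j))⁻¹) (mem_univ i)]
  have hprod : ∏ j, (1 - p j) = P := Finset.prod_congr rfl fun j _ => h1p j
  have hSpos : (0:ℝ) < 1 + ∑ j, Real.exp (g j) := by
    have : (0:ℝ) ≤ ∑ j, Real.exp (g j) :=
      Finset.sum_nonneg fun j _ => (Real.exp_pos _).le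
    linarith
  have hAval : A = (1 + ∑ j, Real.exp (g j)) * P := by
    rw [hA, hprod]
    rw [Finset.sum_congr rfl fun i _ => hterm i, ← Finset.sum_mul]
    ring
  intro i
  rw [hterm i, hAval, one_div, mul_inv, eq_div_iff hSpos.ne']
  field_simp
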